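/- (Reduction 2) Let d ≥ 1. For any m ≥ 0, even c₁, c₂ and odd c₃ with 0 ≤ cᵢ ≤ 2d-1, writing n = 1 + 2d·c₁ + (2d)²·c₂ + (2d)³·c₃ + (2d)⁴·m, one has SG(n) = 0. -/

import Mathlib

/-!
Since `2d` is even, the recursion `SG (x + 1) = mex {SG x, SG (⌊x / 2d⌋ + 1)}` shows by induction
that `SG (x + 1) = 0` exactly when `x = 0`, or `x` is even and `SG (⌊x / 2d⌋ + 1) ≠ 0`.
Reading `n - 1` in base `2d` and applying this criterion to its truncations `c₃ + 2d m`,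
`c₂ + 2d (c₃ + 2d m)`, … (odd, even, nonzero, even) gives `≠ 0, = 0, ≠ 0, = 0` in turn.
-/

/-- mex of the two-element set {a, b}: the least natural number not in {a, b}. -/
def mex2 (a b : ℕ) : ℕ :=
  if 0 ≠ a ∧ 0 ≠ b then 0 else if 1 ≠ a ∧ 1 ≠ b then 1 else if 2 ≠ a ∧ 2 ≠ b then 2 else 3

/-- The Sprague–Grundy sequence of the game G_{1,2d}: SG d 1 = 0 and
    SG d n = mex {SG d (n-1), SG d ⌈n/(2d)⌉} for n ≥ 2. -/
def SG (d : ℕ) : ℕ → ℕ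
  | 0 => 0
  | 1 => 0
  | n + 2 => mex2 (SG d (n + 1)) (SG d ((n + 2 + (2 * d - 1)) / (2 * d)))
decreasing_by
  · omega
  · rcases Nat.eq_zero_or_pos d with h | h
    · simp [h]
    · have h2 : 0 < 2 * d := by omega
      rw [Nat.div_lt_iff_lt_mul h2]
      simp only [Nat.succ_eq_add_one]
      have h6 : (n + 1 + 1) * 2 ≤ (n + 1 + 1) * (2 * d) := Nat.mul_le_mul_left _ (by omega)
      have h8 : 2 * (2 * d) ≤ (n + 1 + 1) * (2 * d) := Nat.mul_le_mul_right _ (by omega)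
      omega

lemma mex2_eq_zero_iff {a b : ℕ} : mex2 a b = 0 ↔ a ≠ 0 ∧ b ≠ 0 := by
  unfold mex2
  split_ifs <;> grind

lemma SG_add_two {d : ℕ} (hd : 1 ≤ d) (x : ℕ) :
    SG d (x + 2) = mex2 (SG d (x + 1)) (SG d ((x + 1) / (2 * d) + 1)) := by
  rw [SG, show x + 2 + (2 * d - 1) = x + 1 + 2 * d by omega,
    Nat.add_div_right _ (by omega : 0 < 2 * d)]

theorem SG_succ_eq_zero_iff {d : ℕ} (hd : 1 ≤ d) (x : ℕ) :
    SG d (x + 1) = 0 ↔ x = 0 ∨ (Even x ∧ SG d (x / (2 * d) + 1) ≠ 0) := by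
  induction x with
  | zero => simp [SG]
  | succ y ih =>
    rw [SG_add_two hd, mex2_eq_zero_iff]
    rcases Nat.even_or_odd y with hy | hy
    · have hy' : ¬ Even (y + 1) := Nat.not_even_iff_odd.mpr hy.add_one
      have hdiv : (y + 1) / (2 * d) = y / (2 * d) :=
        Nat.succ_div_of_not_dvd fun h => hy' (even_iff_two_dvd.mpr ((dvd_mul_right 2 d).trans h))
      rw [hdiv]
      simp only [hy, true_and] at ih
      simp only [hy', false_and, or_false, ne_eq, Nat.add_one_ne_zero, iff_false, not_and]
      tauto
    · have hSG : SG d (y + 1) ≠ 0 := by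
        simp [ih, hy.pos.ne', Nat.not_even_iff_odd.mpr hy]
      have hy' : Even (y + 1) := hy.add_one
      simp [hSG, hy']

lemma SG_succ_ne_zero_of_odd {d x : ℕ} (hd : 1 ≤ d) (hx : Odd x) : SG d (x + 1) ≠ 0 := by
  rw [ne_eq, SG_succ_eq_zero_iff hd]
  simp [hx.pos.ne', Nat.not_even_iff_odd.mpr hx]

lemma SG_succ_eq_zero_of_even {d x : ℕ} (hd : 1 ≤ d) (hx : Even x)
    (h : SG d (x / (2 * d) + 1) ≠ 0) : SG d (x + 1) = 0 :=
  (SG_succ_eq_zero_iff hd x).mpr (.inr ⟨hx, h⟩)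

lemma SG_succ_ne_zero_of_ne_zero {d x : ℕ} (hd : 1 ≤ d) (hx : x ≠ 0)
    (h : SG d (x / (2 * d) + 1) = 0) : SG d (x + 1) ≠ 0 := by
  intro h0
  rcases (SG_succ_eq_zero_iff hd x).mp h0 with hx0 | ⟨-, hne⟩
  exacts [hx hx0, hne h]

theorem stmt_10_general (d : ℕ) (hd : 1 ≤ d) (c₁ c₂ c₃ m : ℕ)
    (h2 : Even c₂) (h3 : Odd c₃)
    (b1 : c₁ ≤ 2 * d - 1) (b2 : c₂ ≤ 2 * d - 1) :
    SG d (1 + 2 * d * c₁ + (2 * d) ^ 2 * c₂ + (2 * d) ^ 3 * c₃ + (2 * d) ^ 4 * m)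
      = 0 := by
  have hD : 0 < 2 * d := by omega
  have hE : Even (2 * d) := even_two_mul d
  have div_eq {c q : ℕ} (hc : c ≤ 2 * d - 1) : (c + 2 * d * q) / (2 * d) = q := by
    rw [Nat.add_mul_div_left _ _ hD, Nat.div_eq_of_lt (by omega), zero_add]
  set x₃ := c₃ + 2 * d * m
  set x₂ := c₂ + 2 * d * x₃
  set x₁ := c₁ + 2 * d * x₂
  have hx₃ : Odd x₃ := h3.add_even (hE.mul_right m)
  have s₃ : SG d (x₃ + 1) ≠ 0 := SG_succ_ne_zero_of_odd hd hx₃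
  have s₂ : SG d (x₂ + 1) = 0 :=
    SG_succ_eq_zero_of_even hd (h2.add (hE.mul_right x₃)) (by rwa [div_eq b2])
  have s₁ : SG d (x₁ + 1) ≠ 0 :=
    SG_succ_ne_zero_of_ne_zero hd (by simp [x₁, x₂, hx₃.pos.ne', hD.ne']) (by rwa [div_eq b1])
  have hn : 1 + 2 * d * c₁ + (2 * d) ^ 2 * c₂ + (2 * d) ^ 3 * c₃ + (2 * d) ^ 4 * m
      = 2 * d * x₁ + 1 := by ring
  rw [hn]
  exact SG_succ_eq_zero_of_even hd (hE.mul_right x₁) (by rwa [Nat.mul_div_cancel_left _ hD])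

theorem stmt_10 (d : ℕ) (hd : 1 ≤ d) (c₁ c₂ c₃ m : ℕ)
    (h1 : Even c₁) (h2 : Even c₂) (h3 : Odd c₃)
    (b1 : c₁ ≤ 2 * d - 1) (b2 : c₂ ≤ 2 * d - 1) (b3 : c₃ ≤ 2 * d - 1) :
    SG d (1 + 2 * d * c₁ + (2 * d) ^ 2 * c₂ + (2 * d) ^ 3 * c₃ + (2 * d) ^ 4 * m)
      = 0 :=
  stmt_10_general d hd c₁ c₂ c₃ m h2 h3 b1 b2
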